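/- arXiv:2503.22110 — 2 statements merged into one kernel-verified Lean document; each statement's English description precedes it below -/
import Mathlib

section
/- Let P be a finite bounded poset, let Γ: m₁,…,m_t be a total order on the maximal chains of P, and let λ be the CE-labeling of P determined by Γ. If two maximal chains m and m' of a rooted interval [x,1̂]_r contain distinct atoms of [x,1̂], then the label sequences of m and m' are distinct. Moreover, for any distinct maximal chains c and c' of a rooted interval [x,y]_r, the label sequence of c is not a prefix of the label sequence of c'. -/
open scoped Classical

variable {P : Type*} [PartialOrder P] [BoundedOrder P]

/-- `CoverList l` : consecutive entries of `l` are cover relations. -/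
def CoverList : List P → Prop
  | x :: y :: t => x ⋖ y ∧ CoverList (y :: t)
  | _ => True

/-- `SatFromTo l x y` : `l` is a saturated chain (i.e. a maximal chain of the interval
`[x,y]`) starting at `x` and ending at `y`. -/
def SatFromTo (l : List P) (x y : P) : Prop :=
  l ≠ [] ∧ l.head? = some x ∧ l.getLast? = some y ∧ CoverList l

/-- `m` is a maximal chain of the bounded poset `P`. -/
def MaxChainOfP (m : List P) : Prop := SatFromTo m ⊥ ⊤

/-- `r` is a root of `x`, i.e. a maximal chain of `[⊥, x]` (it contains `x`). -/
def RootOf (r : List P) (x : P) : Prop := SatFromTo r ⊥ x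

/-- The label sequence of a chain (the second argument, which starts at the last
element of the root `r`) with respect to a chain-edge labeling `lab`. -/
def labelSeq {Λ : Type*} (lab : List P → P → P → Λ) : List P → List P → List Λ
  | r, x :: y :: t => lab r x y :: labelSeq lab (r ++ [y]) (y :: t)
  | _, _ => []

/-- The pair of rooted cover relations `[u,v]_r`, `[v,w]_{r∪{v}}` is a topological
ascent: its label sequence lexicographically strictly precedes the label sequence of
every other maximal chain of `[u,w]_r`. -/
def TopAscent (lab : List P → P → P → ℤ) (r : List P) (u v w : P) : Prop :=
  ∀ c : List P, SatFromTo c u w → c ≠ [u, v, w] →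
    List.Lex (· < ·) (labelSeq lab r [u, v, w]) (labelSeq lab r c)

/-- The chain (second argument) with root `r` is topologically ascending. -/
def TopAscending (lab : List P → P → P → ℤ) : List P → List P → Prop
  | r, u :: v :: w :: t => TopAscent lab r u v w ∧ TopAscending lab (r ++ [v]) (v :: w :: t)
  | _, _ => True

/-- TCL-labeling : every rooted interval has a unique topologically ascending
maximal chain. -/
def IsTCLLabeling (lab : List P → P → P → ℤ) : Prop :=
  ∀ x y : P, x ≤ y → ∀ r : List P, RootOf r x →
    ∃! c : List P, SatFromTo c x y ∧ TopAscending lab r c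

/-- CC-labeling : a TCL-labeling such that in every rooted interval distinct maximal
chains get distinct label sequences, none of which is a prefix of another. -/
def IsCCLabeling (lab : List P → P → P → ℤ) : Prop :=
  IsTCLLabeling lab ∧
    ∀ x y : P, x ≤ y → ∀ r : List P, RootOf r x →
      ∀ c c' : List P, SatFromTo c x y → SatFromTo c' x y → c ≠ c' →
        ¬ labelSeq lab r c <+: labelSeq lab r c'

/-- CL-labeling with labels in an arbitrary poset `Λ`. -/
def IsCLLabeling {Λ : Type*} [PartialOrder Λ] (lab : List P → P → P → Λ) : Prop :=
  ∀ x y : P, x ≤ y → ∀ r : List P, RootOf r x →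
    ∃ c : List P, (SatFromTo c x y ∧ List.Chain' (· < ·) (labelSeq lab r c)) ∧
      (∀ c' : List P, SatFromTo c' x y → List.Chain' (· < ·) (labelSeq lab r c') → c' = c) ∧
      (∀ c' : List P, SatFromTo c' x y → c' ≠ c →
        List.Lex (· < ·) (labelSeq lab r c) (labelSeq lab r c'))

def TCLShellable (P : Type*) [PartialOrder P] [BoundedOrder P] : Prop :=
  ∃ lab : List P → P → P → ℤ, IsTCLLabeling lab

def CCShellable (P : Type*) [PartialOrder P] [BoundedOrder P] : Prop :=
  ∃ lab : List P → P → P → ℤ, IsCCLabeling lab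

def CLShellable (P : Type*) [PartialOrder P] [BoundedOrder P] : Prop :=
  ∃ (Λ : Type) (_ : PartialOrder Λ) (lab : List P → P → P → Λ), IsCLLabeling lab

/-- `P` is graded : all maximal chains of `P` have the same length. -/
def Graded (P : Type*) [PartialOrder P] [BoundedOrder P] : Prop :=
  ∀ c c' : List P, MaxChainOfP c → MaxChainOfP c' → c.length = c'.length

/-- `Γ` is a total order `m₁, …, m_t` on the maximal chains of `P`. -/
def Enumerates (Γ : List (List P)) : Prop :=
  Γ.Nodup ∧ ∀ m : List P, m ∈ Γ ↔ MaxChainOfP m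

/-- `Γ` is a total order on the maximal chains which agrees with (is consistent with)
the lexicographic order on maximal chains induced by `lab`. -/
def AgreesWithLex (lab : List P → P → P → ℤ) (Γ : List (List P)) : Prop :=
  Enumerates Γ ∧ ∀ i j : ℕ, i < j → j < Γ.length →
    ¬ List.Lex (· < ·) (labelSeq lab [(⊥ : P)] (Γ.getD j []))
        (labelSeq lab [(⊥ : P)] (Γ.getD i []))

/-- Position in `Γ` of the earliest maximal chain containing all elements of `l`. -/
noncomputable def fidx (Γ : List (List P)) (l : List P) : ℕ :=
  Γ.findIdx fun m => decide (∀ a ∈ l, a ∈ m)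

/-- `a'` witnesses that the earliest chain containing `r ∪ {a}` is "sandwiched" by
two chains containing `r ∪ {a'}`. -/
def Sandwiched (Γ : List (List P)) (r : List P) (x a a' : P) : Prop :=
  x ⋖ a' ∧ fidx Γ (r ++ [a']) < fidx Γ (r ++ [a]) ∧
    ∃ l : ℕ, fidx Γ (r ++ [a]) < l ∧ l < Γ.length ∧ ∀ w ∈ r ++ [a'], w ∈ Γ.getD l []

/-- The label (a position in `Γ`) that the CE-labeling determined by the total order
`Γ` assigns to the rooted cover relation `[x,a]_r`. -/
noncomputable def detLabel (Γ : List (List P)) (r : List P) (x a : P) : ℕ :=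
  if h : ∃ n : ℕ, ∃ a' : P, Sandwiched Γ r x a a' ∧ fidx Γ (r ++ [a']) = n then
    detLabel Γ r x (Nat.find_spec h).choose
  else fidx Γ (r ++ [a])
termination_by fidx Γ (r ++ [a])
decreasing_by exact ((Nat.find_spec h).choose_spec).1.2.1

/-- The CE-labeling of `P` determined by the total order `Γ` on maximal chains. -/
noncomputable def detLabeling (Γ : List (List P)) : List P → P → P → ℤ :=
  fun r x a => (detLabel Γ r x a : ℤ)

/-- `Ω` is a recursive first atom set (RFAS) for `P`. -/
def IsRFAS (Ω : List P → P → P → P) : Prop :=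
  (∀ c : List P, CoverList c → c.length ≤ 2) ∨
    ∀ x y : P, x < y → ∀ r : List P, RootOf r x →
      (x ⋖ Ω r x y ∧ Ω r x y ≤ y) ∧
      ∀ a : P, x ⋖ a → a < y →
        (a = Ω r x y ↔ a = Ω r x (Ω (r ++ [a]) a y)) ∧
        (a ≠ Ω r x y →
          ∃ (p : ℕ) (A B : ℕ → P), 1 ≤ p ∧
            (∀ i, 1 ≤ i → i ≤ p → x ⋖ A i ∧ A i ≤ y) ∧
            A p = Ω r x (Ω (r ++ [a]) a y) ∧ A 1 = Ω r x y ∧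
            ∀ i, 1 ≤ i → i ≤ p - 1 →
              B i = Ω (r ++ [A (i + 1)]) (A (i + 1)) y ∧ A i = Ω r x (B i))

/-- The chain (second argument, a saturated chain from the last element of the root to
`y`) is the first atom chain `c(r, x, y)` of the rooted interval with top `y`:
each step except possibly the last follows the first atoms of `Ω`. -/
def IsFAC (Ω : List P → P → P → P) (y : P) : List P → List P → Prop
  | r, x :: z :: t => (t ≠ [] → z = Ω r x y) ∧ IsFAC Ω y (r ++ [z]) (z :: t)
  | _, _ => True

/-- The chain (second argument) with root `r` contains a pseudo descent with respect
to `Ω`. -/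
def HasPseudoDescent (Ω : List P → P → P → P) : List P → List P → Prop
  | r, u :: v :: w :: t => v ≠ Ω r u w ∨ HasPseudoDescent Ω (r ++ [v]) (v :: w :: t)
  | _, _ => False

/-- `m → m'` : `m` is obtained from the maximal chain `m'` by replacing a pseudo
descent `x ⋖ y ⋖ z` of `m'` with the first atom chain `c(m^x, x, z)`. -/
def StepRel (Ω : List P → P → P → P) (m m' : List P) : Prop :=
  MaxChainOfP m ∧ MaxChainOfP m' ∧
    ∃ (x y z : P) (r d c : List P),
      RootOf r x ∧ x ⋖ y ∧ y ⋖ z ∧ y ≠ Ω r x z ∧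
      m' = r ++ y :: z :: d ∧
      SatFromTo c x z ∧ IsFAC Ω z r c ∧
      m = r ++ c.tail ++ d

/-- `Γ` is a linear extension of the partial order `⪯` (the reflexive-transitive
closure of `→`) on the maximal chains of `P`. -/
def LinExtOf (Ω : List P → P → P → P) (Γ : List (List P)) : Prop :=
  Enumerates Γ ∧ ∀ i j : ℕ, i < Γ.length → j < Γ.length →
    Relation.ReflTransGen (StepRel Ω) (Γ.getD i []) (Γ.getD j []) → i ≤ j

/-- `Γ`, a total order on the facets (maximal chains) of the order complex `Δ(P)`,
is a shelling order: for each `j` the intersection of the `j`-th facet with the union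
of the earlier ones is pure of dimension one less than that of the `j`-th facet. -/
def IsShelling (Γ : List (List P)) : Prop :=
  ∀ j : ℕ, 0 < j → j < Γ.length → ∀ S : Finset P,
    S ⊆ (Γ.getD j []).toFinset → (∃ i < j, S ⊆ (Γ.getD i []).toFinset) →
    ∃ T : Finset P, S ⊆ T ∧ T ⊆ (Γ.getD j []).toFinset ∧
      (∃ i < j, T ⊆ (Γ.getD i []).toFinset) ∧
      T.card + 1 = (Γ.getD j []).toFinset.card

/-- Condition (LC) for a linear extension `Γ` of `⪯`. -/
def LCCondition (Γ : List (List P)) : Prop :=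
  ∀ i j k : ℕ, i < j → j < k → k < Γ.length →
    ∀ (r : List P) (x y y' z : P), RootOf r x → x ⋖ y → y ⋖ z → x ⋖ y' →
      (∀ w ∈ r ++ [y, z], w ∈ Γ.getD i []) →
      (∀ w ∈ r ++ [y, z], w ∈ Γ.getD k []) →
      (∀ w ∈ r ++ [y'], w ∈ Γ.getD j []) → y' = y

/-- `Ω` is a labeling-compatible recursive first atom set (LCRFAS). -/
def IsLCRFAS (Ω : List P → P → P → P) : Prop :=
  IsRFAS Ω ∧ ∃ Γ : List (List P), LinExtOf Ω Γ ∧ LCCondition Γ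

/-- The CE-labeling `lab` is compatible with the RFAS `Ω` : in every rooted interval
the first atom lies on a lexicographically smallest maximal chain. -/
def Compatible (lab : List P → P → P → ℤ) (Ω : List P → P → P → P) : Prop :=
  ∀ x y : P, x < y → ∀ r : List P, RootOf r x →
    ∃ c : List P, SatFromTo c x y ∧ Ω r x y ∈ c ∧
      ∀ c' : List P, SatFromTo c' x y →
        ¬ List.Lex (· < ·) (labelSeq lab r c') (labelSeq lab r c)

/-!
Every label of the CE-labeling determined by `Γ` is the position in `Γ` of the earliest maximal
chain through `r ∪ {w}` for some atom `w` (a label is only ever copied from an atom whose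
earliest chain comes earlier). Hence if two chains of `[x, y]_r` leave `x` through distinct
atoms `a ≠ a'` and have equal second labels, the maximal chain at that common position
contains both `a` and `a'`, which are incomparable. So one label sequence can be a prefix of
another only if the chains share their first atom, and then we recurse into `[a, y]_{r ∪ {a}}`.
-/

section Chains

variable {α : Type*} [PartialOrder α]

theorem coverList_iff_isChain : ∀ {l : List α}, CoverList l ↔ l.IsChain (· ⋖ ·)
  | [] => by simp [CoverList]
  | [_] => by simp [CoverList]
  | _ :: _ :: _ => by simp [CoverList, coverList_iff_isChain]

theorem CoverList.pairwise_le {l : List α} (h : CoverList l) : l.Pairwise (· ≤ ·) :=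
  ((coverList_iff_isChain.mp h).imp fun _ _ h ↦ h.le).pairwise

theorem CoverList.eq_of_covBy_of_mem {l : List α} (h : CoverList l) {x a a' : α}
    (hxa : x ⋖ a) (hxa' : x ⋖ a') (ha : a ∈ l) (ha' : a' ∈ l) : a = a' := by
  by_contra hne
  rcases (h.pairwise_le.imp Relation.SymmGen.of_le).forall ha ha' hne with hle | hle
  · exact hne <| (hxa'.eq_or_eq hxa.le hle).resolve_left hxa.ne'
  · exact hne <| ((hxa.eq_or_eq hxa'.le hle).resolve_left hxa'.ne').symm

theorem satFromTo_singleton_iff {x z y : α} : SatFromTo [x] z y ↔ x = z ∧ x = y := by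
  simp [SatFromTo, CoverList, eq_comm]

theorem satFromTo_cons_cons_iff {x a z y : α} {t : List α} :
    SatFromTo (x :: a :: t) z y ↔ x = z ∧ x ⋖ a ∧ SatFromTo (a :: t) a y := by
  simp [SatFromTo, CoverList, and_left_comm]

namespace SatFromTo

variable {l : List α} {x y : α}

theorem exists_eq_cons (h : SatFromTo l x y) : ∃ t, l = x :: t :=
  List.head?_eq_some_iff.mp h.2.1

theorem le_of_mem (h : SatFromTo l x y) {w : α} (hw : w ∈ l) : w ≤ y := by
  refine (coverList_iff_isChain.mp h.2.2.2).backwards_induction (· ≤ y) l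
    (fun _ _ hab hb ↦ hab.le.trans hb) (fun hne ↦ ?_) w hw
  have hlast := h.2.2.1
  rw [List.getLast?_eq_some_getLast hne, Option.some_inj] at hlast
  exact hlast.le

theorem concat {z : α} (h : SatFromTo l x y) (hyz : y ⋖ z) : SatFromTo (l ++ [z]) x z := by
  refine ⟨by simp, by simp [h.2.1], List.getLast?_concat, coverList_iff_isChain.mpr ?_⟩
  exact (coverList_iff_isChain.mp h.2.2.2).append (List.isChain_singleton z)
    (by simpa [h.2.2.1] using hyz)

theorem exists_maxChainOfP_superset [BoundedOrder α] [Finite α] (h : SatFromTo l ⊥ y) :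
    ∃ m, MaxChainOfP m ∧ l ⊆ m := by
  induction y using WellFoundedGT.induction generalizing l with
  | _ y ih =>
    rcases (le_top : y ≤ ⊤).eq_or_lt with rfl | hy
    · exact ⟨l, h, List.Subset.refl l⟩
    · obtain ⟨z, hyz, -⟩ := exists_covBy_le_of_lt hy
      obtain ⟨m, hm, hlm⟩ := ih z hyz.lt (h.concat hyz)
      exact ⟨m, hm, List.Subset.trans (List.subset_append_left _ _) hlm⟩

theorem eq_singleton (h : SatFromTo l x x) : l = [x] := by
  obtain ⟨_ | ⟨a, t⟩, rfl⟩ := h.exists_eq_cons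
  · rfl
  · have hxa := (satFromTo_cons_cons_iff.mp h).2.1
    exact absurd (h.le_of_mem (by simp)) hxa.lt.not_ge

end SatFromTo

end Chains

section Labeling

variable {α : Type*} {Γ : List (List α)}

theorem subset_getD_fidx {l : List α} (h : fidx Γ l < Γ.length) :
    l ⊆ Γ.getD (fidx Γ l) [] := by
  rw [List.getD_eq_getElem _ _ h]
  exact of_decide_eq_true (List.findIdx_getElem (w := h))

variable [PartialOrder α]

theorem exists_detLabel_eq_fidx (Γ : List (List α)) (r : List α) {x a : α} (hxa : x ⋖ a) :
    ∃ w, x ⋖ w ∧ detLabel Γ r x a = fidx Γ (r ++ [w]) := by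
  induction hn : fidx Γ (r ++ [a]) using Nat.strong_induction_on generalizing a with
  | _ n ih =>
    rw [detLabel]
    split_ifs with h
    · have hs := (Nat.find_spec h).choose_spec.1
      exact ih _ (hn ▸ hs.2.1) hs.1 rfl
    · exact ⟨a, hxa, rfl⟩

variable [BoundedOrder α]

theorem maxChainOfP_getD (hΓ : Enumerates Γ) {i : ℕ} (hi : i < Γ.length) :
    MaxChainOfP (Γ.getD i []) :=
  (hΓ.2 _).mp (List.getD_eq_getElem _ _ hi ▸ List.getElem_mem hi)

variable [Finite α]

theorem fidx_lt_length (hΓ : Enumerates Γ) {l : List α} {y : α} (hl : SatFromTo l ⊥ y) :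
    fidx Γ l < Γ.length := by
  obtain ⟨m, hm, hlm⟩ := hl.exists_maxChainOfP_superset
  exact List.findIdx_lt_length_of_exists ⟨m, (hΓ.2 m).mpr hm, decide_eq_true hlm⟩

theorem detLabel_ne_of_ne (hΓ : Enumerates Γ) {r : List α} {x a a' b b' : α} (hr : RootOf r x)
    (hxa : x ⋖ a) (hxa' : x ⋖ a') (hne : a ≠ a')
    (hab : a ⋖ b) (hab' : a' ⋖ b') :
    detLabel Γ (r ++ [a]) a b ≠ detLabel Γ (r ++ [a']) a' b' := by
  intro heq
  obtain ⟨w, haw, hw⟩ := exists_detLabel_eq_fidx Γ (r ++ [a]) hab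
  obtain ⟨w', haw', hw'⟩ := exists_detLabel_eq_fidx Γ (r ++ [a']) hab'
  have hlt := fidx_lt_length hΓ ((hr.concat hxa).concat haw)
  have hsub := subset_getD_fidx hlt
  have hsub' := subset_getD_fidx (fidx_lt_length hΓ ((hr.concat hxa').concat haw'))
  rw [← hw', ← heq, hw] at hsub'
  exact hne <| (maxChainOfP_getD hΓ hlt).2.2.2.eq_of_covBy_of_mem hxa hxa'
    (hsub (by simp)) (hsub' (by simp))

theorem not_labelSeq_detLabeling_prefix_of_ne (hΓ : Enumerates Γ) {r : List α} {x a a' y : α}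
    (hr : RootOf r x) (hxa : x ⋖ a) (hxa' : x ⋖ a') (hne : a ≠ a') :
    ∀ {t t' : List α}, SatFromTo (a :: t) a y → SatFromTo (a' :: t') a' y →
      ¬ labelSeq (detLabeling Γ) (r ++ [a]) (a :: t) <+:
        labelSeq (detLabeling Γ) (r ++ [a']) (a' :: t')
  | [], _, hc, hc', _ => by
    obtain ⟨-, rfl⟩ := satFromTo_singleton_iff.mp hc
    exact hne ((hxa.eq_or_eq hxa'.le (hc'.le_of_mem (by simp))).resolve_left hxa'.ne').symm
  | _ :: _, [], _, _, hpre => by simp [labelSeq] at hpre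
  | _ :: _, _ :: _, hc, hc', hpre => by
    simp only [labelSeq, List.cons_prefix_cons, detLabeling, Nat.cast_inj] at hpre
    exact detLabel_ne_of_ne hΓ hr hxa hxa' hne (satFromTo_cons_cons_iff.mp hc).2.1
      (satFromTo_cons_cons_iff.mp hc').2.1 hpre.1

theorem not_labelSeq_detLabeling_prefix (hΓ : Enumerates Γ) :
    ∀ {c c' r : List α} {x y : α}, RootOf r x → SatFromTo c x y → SatFromTo c' x y →
      c ≠ c' → ¬ labelSeq (detLabeling Γ) r c <+: labelSeq (detLabeling Γ) r c'
  | [], _, _, _, _, _, hc, _, _ => absurd rfl hc.1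
  | _ :: _, [], _, _, _, _, _, hc', _ => absurd rfl hc'.1
  | [_], _ :: _, _, _, _, _, hc, hc', hne => by
    obtain ⟨rfl, rfl⟩ := satFromTo_singleton_iff.mp hc
    exact absurd hc'.eq_singleton.symm hne
  | _ :: _ :: _, [_], _, _, _, _, _, _, _ => by simp [labelSeq]
  | _ :: a :: _, _ :: a' :: _, _, _, _, hr, hc, hc', hne => by
    obtain ⟨rfl, hxa, hat⟩ := satFromTo_cons_cons_iff.mp hc
    obtain ⟨rfl, hxa', hat'⟩ := satFromTo_cons_cons_iff.mp hc'
    simp only [labelSeq, List.cons_prefix_cons, not_and]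
    intro _
    obtain rfl | haa := eq_or_ne a a'
    · exact not_labelSeq_detLabeling_prefix hΓ (hr.concat hxa) hat hat' (by simpa using hne)
    · exact not_labelSeq_detLabeling_prefix_of_ne hΓ hr hxa hxa' haa hat hat'

end Labeling

/-- Proposition 4.5 (ii): for the CE-labeling determined by a total order `Γ` on the
maximal chains, maximal chains of `[x, ⊤]_r` through distinct atoms get distinct label
sequences; moreover, for distinct maximal chains of any rooted interval `[x,y]_r`,
neither label sequence is a prefix of the other. -/
theorem stmt3 {P : Type*} [PartialOrder P] [BoundedOrder P] [Fintype P]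
    (Γ : List (List P)) (hΓ : Enumerates Γ)
    (x : P) (r : List P) (hr : RootOf r x) :
    (∀ m m' : List P, SatFromTo m x ⊤ → SatFromTo m' x ⊤ →
      ∀ (a a' : P) (tm tm' : List P), m = x :: a :: tm → m' = x :: a' :: tm' → a ≠ a' →
        labelSeq (detLabeling Γ) r m ≠ labelSeq (detLabeling Γ) r m') ∧
    (∀ y : P, x ≤ y → ∀ c c' : List P, SatFromTo c x y → SatFromTo c' x y → c ≠ c' →
      ¬ labelSeq (detLabeling Γ) r c <+: labelSeq (detLabeling Γ) r c') := by
  refine ⟨?_, fun y _ c c' hc hc' hne ↦ not_labelSeq_detLabeling_prefix hΓ hr hc hc' hne⟩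
  rintro m m' hm hm' a a' tm tm' rfl rfl hne heq
  refine not_labelSeq_detLabeling_prefix hΓ hr hm hm' ?_ (heq ▸ List.prefix_refl _)
  simp [hne]
end

section
/- Let P be a finite bounded poset with an RFAS Ω. For every rooted interval [x,y]_r of P, the first atom chain c(r,x,y) does not contain a pseudo descent. -/
open scoped Classical

variable {P : Type*} [PartialOrder P] [BoundedOrder P]

lemma sat_le : ∀ (c : List P) (a b : P), SatFromTo c a b → a ≤ b := by
  intro c
  induction c with
  | nil => intro a b h; exact absurd rfl h.1
  | cons u t ih =>
    intro a b h
    obtain ⟨_, hh, hl, hc⟩ := h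
    have hu : u = a := by simpa using hh
    subst hu
    cases t with
    | nil =>
      simp only [List.getLast?_singleton, Option.some.injEq] at hl
      exact le_of_eq hl
    | cons v t' =>
      have h1 : u ⋖ v := hc.1
      have h2 : v ≤ b := ih v b ⟨by simp, rfl, by simpa [List.getLast?_cons_cons] using hl, hc.2⟩
      exact le_trans h1.1.le h2

lemma sat_tail (u v : P) (t : List P) (x y : P) (h : SatFromTo (u :: v :: t) x y) :
    SatFromTo (v :: t) v y := by
  obtain ⟨_, hh, hl, hc⟩ := h
  exact ⟨by simp, rfl, by simpa [List.getLast?_cons_cons] using hl, hc.2⟩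

lemma coverList_append : ∀ (r : List P) (x v : P), CoverList r → r.getLast? = some x →
    x ⋖ v → CoverList (r ++ [v]) := by
  intro r
  induction r with
  | nil => intro x v _ h; simp at h
  | cons u t ih =>
    intro x v hc hl hxv
    cases t with
    | nil =>
      simp only [List.getLast?_singleton, Option.some.injEq] at hl
      subst hl
      exact ⟨hxv, trivial⟩
    | cons w t' =>
      exact ⟨hc.1, ih x v hc.2 (by simpa [List.getLast?_cons_cons] using hl) hxv⟩

lemma root_extend (r : List P) (x v : P) (hr : RootOf r x) (hxv : x ⋖ v) :
    RootOf (r ++ [v]) v := by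
  obtain ⟨hne, hh, hl, hc⟩ := hr
  refine ⟨by simp, ?_, ?_, coverList_append r x v hc hl hxv⟩
  · cases r with
    | nil => exact absurd rfl hne
    | cons a t => simpa using hh
  · simp

lemma fac_no_pd (Ω : List P → P → P → P)
    (hΩ' : ∀ x y : P, x < y → ∀ r : List P, RootOf r x →
      (x ⋖ Ω r x y ∧ Ω r x y ≤ y) ∧
      ∀ a : P, x ⋖ a → a < y →
        (a = Ω r x y ↔ a = Ω r x (Ω (r ++ [a]) a y)) ∧
        (a ≠ Ω r x y →
          ∃ (p : ℕ) (A B : ℕ → P), 1 ≤ p ∧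
            (∀ i, 1 ≤ i → i ≤ p → x ⋖ A i ∧ A i ≤ y) ∧
            A p = Ω r x (Ω (r ++ [a]) a y) ∧ A 1 = Ω r x y ∧
            ∀ i, 1 ≤ i → i ≤ p - 1 →
              B i = Ω (r ++ [A (i + 1)]) (A (i + 1)) y ∧ A i = Ω r x (B i)))
    (y : P) :
    ∀ (c r : List P) (x : P), RootOf r x → SatFromTo c x y → IsFAC Ω y r c →
      ¬ HasPseudoDescent Ω r c := by
  intro c
  induction c with
  | nil => intro r x _ _ _ h; exact h
  | cons u cs ih =>
    intro r x hr hsat hfac hpd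
    match cs, ih, hsat, hfac, hpd with
    | [], _, _, _, hpd => exact hpd
    | [v], _, _, _, hpd => exact hpd
    | v :: w :: t, ih, hsat, hfac, hpd =>
      have hu : u = x := by simpa using hsat.2.1
      subst hu
      have huv : u ⋖ v := hsat.2.2.2.1
      have hvw : v ⋖ w := hsat.2.2.2.2.1
      have hsat' : SatFromTo (v :: w :: t) v y := sat_tail u v (w :: t) u y hsat
      have hr' : RootOf (r ++ [v]) v := root_extend r u v hr huv
      have hv : v = Ω r u y := hfac.1 (by simp)
      have hvw' : v = Ω r u w := by
        cases t with
        | nil =>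
          have hw : w = y := by
            have := hsat.2.2.1
            simp only [List.getLast?_cons_cons, List.getLast?_singleton,
              Option.some.injEq] at this
            exact this
          rw [hw]; exact hv
        | cons w' t' =>
          have hw : w = Ω (r ++ [v]) v y := hfac.2.1 (by simp)
          have hwy : w ≤ y := sat_le (w :: w' :: t')  w y (sat_tail v w (w' :: t') v y hsat')
          have hvy : v < y := lt_of_lt_of_le hvw.1 hwy
          have huy : u < y := lt_trans huv.1 hvy
          have hiff := ((hΩ' u y huy r hr).2 v huv hvy).1
          rw [hw]
          exact hiff.mp hv
      rcases hpd with h | h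
      · exact h hvw'
      · exact ih (r ++ [v]) v hr' hsat' hfac.2 h

/-- Proposition 5.7: the first atom chain of any rooted interval contains no pseudo
descent. -/
theorem stmt11 {P : Type*} [PartialOrder P] [BoundedOrder P] [Fintype P]
    (Ω : List P → P → P → P) (hΩ : IsRFAS Ω)
    (x y : P) (hxy : x ≤ y) (r : List P) (hr : RootOf r x)
    (c : List P) (hc : SatFromTo c x y) (hfac : IsFAC Ω y r c) :
    ¬ HasPseudoDescent Ω r c := by
  rcases hΩ with hshort | hΩ'
  · have hlen : c.length ≤ 2 := hshort c hc.2.2.2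
    match c, hlen with
    | [], _ => intro h; exact h
    | [a], _ => intro h; exact h
    | [a, b], _ => intro h; exact h
  · exact fac_no_pd Ω hΩ' y c r x hr hc hfac
end
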